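/- arXiv:math/0604062 — 2 statements merged into one kernel-verified Lean document; each statement's English description precedes it below -/
import Mathlib

section
/- Let G be a totally disconnected locally compact group with contractive automorphism α, and H ≤ G a compact subgroup with α(H) ⊆ H. Then the index [H : α(H)] is finite. -/
open Filter Topology Set Pointwise

section Helpers

variable {G : Type*} [Group G] [TopologicalSpace G] [IsTopologicalGroup G]

/-- The relative index of an open subgroup in a compact subgroup is nonzero (i.e. finite). -/
lemma relIndex_ne_zero_of_isOpen_of_isCompact {S K : Subgroup G} (hS : IsOpen (S : Set G))
    (hK : IsCompact (K : Set G)) : S.relIndex K ≠ 0 := by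
  classical
  have hcover : (K : Set G) ⊆ ⋃ g : K, (g : G) • (S : Set G) := by
    intro x hx
    refine mem_iUnion.mpr ⟨⟨x, hx⟩, ?_⟩
    rw [mem_smul_set_iff_inv_smul_mem]
    simp [one_mem]
  obtain ⟨t, htcov⟩ := hK.elim_finite_subcover (fun g : K => (g : G) • (S : Set G))
    (fun g => hS.smul _) hcover
  have hfin : Finite (K ⧸ S.subgroupOf K) := by
    have hex : ∀ q : K ⧸ S.subgroupOf K, ∃ g : K, g ∈ t ∧
        ((q.out : K) : G) ∈ (g : G) • (S : Set G) := by
      intro q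
      have : ((q.out : K) : G) ∈ (K : Set G) := (q.out).2
      have := htcov this
      simpa using this
    choose F hFt hFmem using hex
    refine Finite.of_injective (fun q => (⟨F q, hFt q⟩ : {g : K // g ∈ t})) ?_
    intro q₁ q₂ heq
    have hg : F q₁ = F q₂ := by simpa using congrArg Subtype.val heq
    have h1 : ((F q₁ : K) : G)⁻¹ * ((q₁.out : K) : G) ∈ (S : Set G) := by
      have h := hFmem q₁
      rwa [mem_smul_set_iff_inv_smul_mem, smul_eq_mul] at h
    have h2 : ((F q₁ : K) : G)⁻¹ * ((q₂.out : K) : G) ∈ (S : Set G) := by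
      have h := hFmem q₂
      rw [← hg] at h
      rwa [mem_smul_set_iff_inv_smul_mem, smul_eq_mul] at h
    have hmem : ((q₁.out : K) : G)⁻¹ * ((q₂.out : K) : G) ∈ S := by
      have key : ((q₁.out : K) : G)⁻¹ * ((q₂.out : K) : G) =
          (((F q₁ : K) : G)⁻¹ * ((q₁.out : K) : G))⁻¹ *
            (((F q₁ : K) : G)⁻¹ * ((q₂.out : K) : G)) := by
        group
      rw [key]
      exact S.mul_mem (S.inv_mem h1) h2
    calc q₁ = QuotientGroup.mk q₁.out := (QuotientGroup.out_eq' q₁).symm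
      _ = QuotientGroup.mk q₂.out := by
          apply QuotientGroup.eq.mpr
          rw [Subgroup.mem_subgroupOf]
          simpa using hmem
      _ = q₂ := QuotientGroup.out_eq' q₂
  rw [Subgroup.relIndex]
  exact Subgroup.index_ne_zero_of_finite

/-- Adaptation of `IsTopologicalGroup.exist_mul_closure_nhd` to a compact clopen set
in a (not necessarily compact) topological group. -/
lemma exist_mul_closure_nhd' {W : Set G} (Wcpt : IsCompact W) (WClopen : IsClopen W) :
    ∃ T ∈ 𝓝 (1 : G), W * T ⊆ W := by
  apply Wcpt.induction_on (p := fun S ↦ ∃ T ∈ 𝓝 (1 : G), S * T ⊆ W)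
    ⟨Set.univ, by simp only [univ_mem, empty_mul, empty_subset, and_self]⟩
    (fun _ _ huv ⟨T, hT, mem⟩ ↦ ⟨T, hT, (mul_subset_mul_right huv).trans mem⟩)
    fun U V ⟨T₁, hT₁, mem1⟩ ⟨T₂, hT₂, mem2⟩ ↦ ⟨T₁ ∩ T₂, inter_mem hT₁ hT₂, by
      rw [union_mul]
      exact union_subset (mul_subset_mul_left inter_subset_left |>.trans mem1)
        (mul_subset_mul_left inter_subset_right |>.trans mem2)⟩
  intro x memW
  have : (x, 1) ∈ (fun p : G × G ↦ p.1 * p.2) ⁻¹' W := by simp [memW]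
  rcases isOpen_prod_iff.mp (continuous_mul.isOpen_preimage W <| WClopen.2) x 1 this with
    ⟨U, V, Uopen, Vopen, xmemU, onememV, prodsub⟩
  have h6 : U * V ⊆ W := mul_subset_iff.mpr (fun _ hx _ hy ↦ prodsub (mk_mem_prod hx hy))
  exact ⟨U ∩ W, ⟨U, Uopen.mem_nhds xmemU, W, fun _ a ↦ a, rfl⟩,
    V, IsOpen.mem_nhds Vopen onememV, fun _ a ↦ h6 ((mul_subset_mul_right inter_subset_left) a)⟩

/-- Adaptation of `IsTopologicalGroup.exist_openSubgroup_sub_clopen_nhd_of_one` to a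
compact clopen neighborhood in a (not necessarily compact) topological group. -/
lemma exists_openSubgroup_subset_of_isCompact_isClopen {W : Set G} (Wcpt : IsCompact W)
    (WClopen : IsClopen W) (einW : 1 ∈ W) :
    ∃ S : Subgroup G, IsOpen (S : Set G) ∧ (S : Set G) ⊆ W := by
  have hMICN : ∃ T, IsTopologicalGroup.mulInvClosureNhd T W := by
    rcases exist_mul_closure_nhd' Wcpt WClopen with ⟨S, Smemnhds, mulclose⟩
    rcases mem_nhds_iff.mp Smemnhds with ⟨U, UsubS, Uopen, onememU⟩
    refine ⟨U ∩ U⁻¹, ?_, ?_, ?_, ?_⟩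
    · simp [Uopen.mem_nhds onememU, inv_mem_nhds_one]
    · simp [inter_comm]
    · exact Uopen.inter Uopen.inv
    · exact fun a ha ↦ mulclose (mul_subset_mul_left UsubS (mul_subset_mul_left inter_subset_left ha))
  rcases hMICN with ⟨V, hV⟩
  let S : Subgroup G := {
    carrier := ⋃ n, V ^ (n + 1)
    mul_mem' := fun ha hb ↦ by
      rcases mem_iUnion.mp ha with ⟨k, hk⟩
      rcases mem_iUnion.mp hb with ⟨l, hl⟩
      apply mem_iUnion.mpr
      use k + 1 + l
      rw [add_assoc, pow_add]
      exact Set.mul_mem_mul hk hl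
    one_mem' := by
      apply mem_iUnion.mpr
      use 0
      simp [mem_of_mem_nhds hV.nhds]
    inv_mem' := fun ha ↦ by
      rcases mem_iUnion.mp ha with ⟨k, hk⟩
      apply mem_iUnion.mpr
      use k
      rw [← hV.inv]
      simpa only [inv_pow, Set.mem_inv, inv_inv] using hk }
  have hSopen : IsOpen (⋃ n, V ^ (n + 1)) := by
    refine isOpen_iUnion (fun n ↦ ?_)
    rw [pow_succ]
    exact hV.isOpen.mul_left
  refine ⟨S, hSopen, ?_⟩
  have mulVpow (n : ℕ) : W * V ^ (n + 1) ⊆ W := by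
    induction' n with n ih
    · simp [hV.mul]
    · rw [pow_succ, ← mul_assoc]
      exact (Set.mul_subset_mul_right ih).trans hV.mul
  have hsub (n : ℕ) : V ^ (n + 1) ⊆ W * V ^ (n + 1) := by
    intro x xin
    rw [Set.mem_mul]
    exact ⟨1, einW, x, xin, one_mul x⟩
  refine iUnion_subset fun i => ?_
  intro x hx
  exact mulVpow i (hsub i hx)

/-- Van Dantzig: in a totally disconnected locally compact Hausdorff group, every
neighborhood of the identity contains a compact open subgroup. -/
lemma exists_compact_open_subgroup [LocallyCompactSpace G] [T2Space G]
    [TotallyDisconnectedSpace G] {Ω : Set G} (hΩ : Ω ∈ 𝓝 (1 : G)) :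
    ∃ U : Subgroup G, IsCompact (U : Set G) ∧ IsOpen (U : Set G) ∧ (U : Set G) ⊆ Ω := by
  obtain ⟨K, hKcpt, hKnhds⟩ := exists_compact_mem_nhds (1 : G)
  have h1 : Ω ∩ interior K ∈ 𝓝 (1 : G) :=
    inter_mem hΩ (isOpen_interior.mem_nhds (mem_interior_iff_mem_nhds.mpr hKnhds))
  obtain ⟨W, hWbasis, hW1, hWsub⟩ :=
    (loc_compact_Haus_tot_disc_of_zero_dim (H := G)).mem_nhds_iff.mp h1
  have hWclopen : IsClopen W := hWbasis
  have hWcpt : IsCompact W :=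
    hKcpt.of_isClosed_subset hWclopen.isClosed
      ((hWsub.trans inter_subset_right).trans interior_subset)
  obtain ⟨S, hSopen, hSsub⟩ := exists_openSubgroup_subset_of_isCompact_isClopen hWcpt hWclopen hW1
  refine ⟨S, ?_, hSopen, hSsub.trans (hWsub.trans inter_subset_left)⟩
  exact hKcpt.of_isClosed_subset (S.isClosed_of_isOpen hSopen)
    ((hSsub.trans (hWsub.trans inter_subset_right)).trans interior_subset)

end Helpers

section Main

variable {G : Type*} [Group G] [TopologicalSpace G] [IsTopologicalGroup G]
  [LocallyCompactSpace G] [T2Space G] [TotallyDisconnectedSpace G]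

/-- A subgroup is "good" (for `α` and `H`) if it is compact open, forward-invariant
under `α` and normalized by `H`. -/
def IsGoodSubgroup (α : MulAut G) (H : Subgroup G) (C : Subgroup G) : Prop :=
  IsCompact (C : Set G) ∧ IsOpen (C : Set G) ∧ (∀ x ∈ C, α x ∈ C) ∧
    (∀ h ∈ H, ∀ x ∈ C, h * x * h⁻¹ ∈ C)

lemma IsGoodSubgroup.inf {α : MulAut G} {H C₁ C₂ : Subgroup G}
    (h₁ : IsGoodSubgroup α H C₁) (h₂ : IsGoodSubgroup α H C₂) :
    IsGoodSubgroup α H (C₁ ⊓ C₂) := by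
  obtain ⟨h₁c, h₁o, h₁i, h₁n⟩ := h₁
  obtain ⟨h₂c, h₂o, h₂i, h₂n⟩ := h₂
  refine ⟨?_, ?_, ?_, ?_⟩
  · exact h₁c.of_isClosed_subset ((h₁c.isClosed.inter h₂c.isClosed)) inter_subset_left
  · exact h₁o.inter h₂o
  · exact fun x hx => ⟨h₁i x hx.1, h₂i x hx.2⟩
  · exact fun h hh x hx => ⟨h₁n h hh x hx.1, h₂n h hh x hx.2⟩

lemma IsGoodSubgroup.inf_iInf {ι : Type*} [Finite ι] {α : MulAut G} {H C₀ : Subgroup G}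
    (h₀ : IsGoodSubgroup α H C₀) {Cs : ι → Subgroup G} (h : ∀ i, IsGoodSubgroup α H (Cs i)) :
    IsGoodSubgroup α H (C₀ ⊓ ⨅ i, Cs i) := by
  have hcoe : ((C₀ ⊓ ⨅ i, Cs i : Subgroup G) : Set G) =
      (C₀ : Set G) ∩ ⋂ i, (Cs i : Set G) := by
    rw [Subgroup.coe_inf, Subgroup.coe_iInf]
  have hclosed : IsClosed ((C₀ ⊓ ⨅ i, Cs i : Subgroup G) : Set G) := by
    rw [hcoe]
    exact h₀.1.isClosed.inter (isClosed_iInter fun i => (h i).1.isClosed)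
  refine ⟨?_, ?_, ?_, ?_⟩
  · exact h₀.1.of_isClosed_subset hclosed (by rw [hcoe]; exact inter_subset_left)
  · rw [hcoe]
    exact h₀.2.1.inter (isOpen_iInter_of_finite fun i => (h i).2.1)
  · intro y hy
    have hy1 : y ∈ C₀ := (Subgroup.mem_inf.mp hy).1
    have hy2 : ∀ i, y ∈ Cs i := Subgroup.mem_iInf.mp (Subgroup.mem_inf.mp hy).2
    exact Subgroup.mem_inf.mpr ⟨h₀.2.2.1 y hy1,
      Subgroup.mem_iInf.mpr fun i => (h i).2.2.1 y (hy2 i)⟩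
  · intro g hg y hy
    have hy1 : y ∈ C₀ := (Subgroup.mem_inf.mp hy).1
    have hy2 : ∀ i, y ∈ Cs i := Subgroup.mem_iInf.mp (Subgroup.mem_inf.mp hy).2
    exact Subgroup.mem_inf.mpr ⟨h₀.2.2.2 g hg y hy1,
      Subgroup.mem_iInf.mpr fun i => (h i).2.2.2 g hg y (hy2 i)⟩

lemma goodsubgroup_exists (α : MulAut G) (hc : Continuous α) (hc' : Continuous α.symm)
    (hcontr : ∀ x : G, Tendsto (fun n : ℕ => (α ^ n) x) atTop (𝓝 1))
    (H : Subgroup G) (hHcpt : IsCompact (H : Set G)) (hHinv : ∀ x ∈ H, α x ∈ H)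
    {Ω : Set G} (hΩ : Ω ∈ 𝓝 (1 : G)) :
    ∃ C : Subgroup G, IsGoodSubgroup α H C ∧ (C : Set G) ⊆ Ω := by
  classical
  -- iterates of α
  have hpow_mem : ∀ (n : ℕ) (h : G), h ∈ H → (α ^ n) h ∈ H := by
    intro n
    induction n with
    | zero => intro h hh; simpa using hh
    | succ n ih =>
        intro h hh
        have : (α ^ (n + 1)) h = (α ^ n) (α h) := by
          rw [pow_succ, MulAut.mul_apply]
        rw [this]
        exact ih _ (hHinv h hh)
  have hcontpow : ∀ n : ℕ, Continuous ⇑(α ^ n : MulAut G) := by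
    intro n
    induction n with
    | zero =>
        have : ⇑(α ^ 0 : MulAut G) = id := by
          funext x; simp
        rw [this]; exact continuous_id
    | succ n ih =>
        have : ⇑(α ^ (n + 1) : MulAut G) = ⇑(α ^ n : MulAut G) ∘ ⇑α := by
          funext x; rw [Function.comp_apply, pow_succ, MulAut.mul_apply]
        rw [this]
        exact ih.comp hc
  have hcontpowsymm : ∀ n : ℕ, Continuous ⇑((α ^ n : MulAut G).symm) := by
    intro n
    induction n with
    | zero =>
        have h0 : ⇑((α ^ 0 : MulAut G).symm) = id := by
          funext x
          apply (α ^ 0 : MulAut G).injective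
          rw [MulEquiv.apply_symm_apply]
          simp
        rw [h0]; exact continuous_id
    | succ n ih =>
        have : ⇑((α ^ (n + 1) : MulAut G).symm) = ⇑α.symm ∘ ⇑((α ^ n : MulAut G).symm) := by
          funext x
          apply (α ^ (n + 1) : MulAut G).injective
          rw [MulEquiv.apply_symm_apply]
          have : (α ^ (n + 1) : MulAut G) (α.symm (((α ^ n : MulAut G).symm) x))
              = (α ^ n) (α (α.symm (((α ^ n : MulAut G).symm) x))) := by
            rw [pow_succ, MulAut.mul_apply]
          rw [Function.comp_apply, this, MulEquiv.apply_symm_apply, MulEquiv.apply_symm_apply]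
        rw [this]
        exact hc'.comp ih
  -- van Dantzig subgroup inside Ω
  obtain ⟨U₀, hU₀cpt, hU₀open, hU₀sub⟩ := exists_compact_open_subgroup (G := G) hΩ
  -- the H-core of U₀
  let U₁ : Subgroup G :=
    { carrier := {x : G | ∀ h ∈ H, h * x * h⁻¹ ∈ U₀}
      one_mem' := by intro h hh; simpa using one_mem U₀
      mul_mem' := by
        intro x y hx hy h hh
        have key : h * (x * y) * h⁻¹ = (h * x * h⁻¹) * (h * y * h⁻¹) := by group
        rw [key]
        exact U₀.mul_mem (hx h hh) (hy h hh)
      inv_mem' := by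
        intro x hx h hh
        have key : h * x⁻¹ * h⁻¹ = (h * x * h⁻¹)⁻¹ := by group
        rw [key]
        exact U₀.inv_mem (hx h hh) }
  have hU₁sub : (U₁ : Set G) ⊆ (U₀ : Set G) := by
    intro x hx
    have := hx 1 (one_mem H)
    simpa using this
  have hU₁closed : IsClosed (U₁ : Set G) := by
    have : (U₁ : Set G) = ⋂ h ∈ (H : Set G), (fun x => h * x * h⁻¹) ⁻¹' (U₀ : Set G) := by
      ext x; simp [U₁, Set.mem_iInter]
    rw [this]
    exact isClosed_biInter fun h _ =>
      (hU₀cpt.isClosed).preimage (by continuity)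
  have hU₁cpt : IsCompact (U₁ : Set G) := hU₀cpt.of_isClosed_subset hU₁closed hU₁sub
  have hU₁norm : ∀ h ∈ H, ∀ x ∈ U₁, h * x * h⁻¹ ∈ U₁ := by
    intro h hh x hx h' hh'
    have key : h' * (h * x * h⁻¹) * h'⁻¹ = (h' * h) * x * (h' * h)⁻¹ := by group
    rw [key]
    exact hx (h' * h) (mul_mem hh' hh)
  have hU₁open : IsOpen (U₁ : Set G) := by
    have key : ∀ h : G, h ∈ (H : Set G) → ∃ WO : Set G × Set G, IsOpen WO.1 ∧ IsOpen WO.2 ∧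
        h ∈ WO.1 ∧ (1 : G) ∈ WO.2 ∧ ∀ g ∈ WO.1, ∀ x ∈ WO.2, g * x * g⁻¹ ∈ U₀ := by
      intro h _
      have hcont : Continuous (fun p : G × G => p.1 * p.2 * p.1⁻¹) := by continuity
      have hmem : (h, (1 : G)) ∈ (fun p : G × G => p.1 * p.2 * p.1⁻¹) ⁻¹' (U₀ : Set G) := by
        simp [one_mem]
      obtain ⟨W, O, hWo, hOo, hhW, h1O, hsub⟩ :=
        isOpen_prod_iff.mp (hU₀open.preimage hcont) h 1 hmem
      exact ⟨(W, O), hWo, hOo, hhW, h1O, fun g hg x hx => hsub (mk_mem_prod hg hx)⟩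
    choose! WO hW1 hW2 hWh hO1 hprop using key
    obtain ⟨t, htH, htcov⟩ := hHcpt.elim_nhds_subcover (fun h => (WO h).1)
      (fun h hh => (hW1 h hh).mem_nhds (hWh h hh))
    set O : Set G := ⋂ h ∈ t, (WO h).2 with hOdef
    have hOopen : IsOpen O := isOpen_biInter_finset fun h hht => hW2 h (htH h hht)
    have hO1' : (1 : G) ∈ O := by
      rw [hOdef]
      exact mem_biInter fun h hht => hO1 h (htH h hht)
    have hOsub : O ⊆ (U₁ : Set G) := by
      intro x hx h hh
      obtain ⟨h', hh't, hh'W⟩ := mem_iUnion₂.mp (htcov hh)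
      have hxO : x ∈ (WO h').2 := by
        have := hx
        rw [hOdef] at this
        exact mem_iInter₂.mp this h' hh't
      exact hprop h' (htH h' hh't) h hh'W x hxO
    exact Subgroup.isOpen_of_mem_nhds U₁ (Filter.mem_of_superset (hOopen.mem_nhds hO1') hOsub)
  -- the forward-invariant part of U₁
  let C : Subgroup G :=
    { carrier := {x : G | ∀ n : ℕ, (α ^ n) x ∈ U₁}
      one_mem' := by intro n; rw [map_one]; exact one_mem U₁
      mul_mem' := by
        intro x y hx hy n
        rw [map_mul]
        exact U₁.mul_mem (hx n) (hy n)
      inv_mem' := by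
        intro x hx n
        rw [map_inv]
        exact U₁.inv_mem (hx n) }
  have hCsub : (C : Set G) ⊆ (U₁ : Set G) := by
    intro x hx
    have := hx 0
    simpa using this
  have hCclosed : IsClosed (C : Set G) := by
    have : (C : Set G) = ⋂ n : ℕ, ⇑(α ^ n : MulAut G) ⁻¹' (U₁ : Set G) := by
      ext x; simp [C, Set.mem_iInter]
    rw [this]
    exact isClosed_iInter fun n => hU₁closed.preimage (hcontpow n)
  have hCcpt : IsCompact (C : Set G) := hU₁cpt.of_isClosed_subset hCclosed hCsub
  have hCinv : ∀ x ∈ C, α x ∈ C := by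
    intro x hx n
    have : (α ^ n) (α x) = (α ^ (n + 1)) x := by rw [pow_succ, MulAut.mul_apply]
    rw [this]
    exact hx (n + 1)
  have hCnorm : ∀ h ∈ H, ∀ x ∈ C, h * x * h⁻¹ ∈ C := by
    intro h hh x hx n
    have : (α ^ n) (h * x * h⁻¹) = ((α ^ n) h) * ((α ^ n) x) * ((α ^ n) h)⁻¹ := by
      rw [map_mul, map_mul, map_inv]
    rw [this]
    exact hU₁norm _ (hpow_mem n h hh) _ (hx n)
  -- openness of C, via Baire
  have hCopen : IsOpen (C : Set G) := by
    have hclosed : ∀ n : ℕ, IsClosed (⇑(α ^ n : MulAut G) ⁻¹' (C : Set G)) :=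
      fun n => hCclosed.preimage (hcontpow n)
    have hcover : ⋃ n : ℕ, ⇑(α ^ n : MulAut G) ⁻¹' (C : Set G) = univ := by
      apply eq_univ_of_forall
      intro x
      have hU₁nhds : (U₁ : Set G) ∈ 𝓝 (1 : G) := hU₁open.mem_nhds (one_mem U₁)
      have hev : {n : ℕ | (α ^ n) x ∈ (U₁ : Set G)} ∈ atTop := hcontr x hU₁nhds
      obtain ⟨N, hN⟩ := mem_atTop_sets.mp hev
      refine mem_iUnion.mpr ⟨N, ?_⟩
      show (α ^ N) x ∈ C
      intro m
      have : (α ^ m) ((α ^ N) x) = (α ^ (m + N)) x := by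
        rw [pow_add, MulAut.mul_apply]
      rw [this]
      exact hN (m + N) (Nat.le_add_left N m)
    obtain ⟨N, hNne⟩ := nonempty_interior_of_iUnion_of_closed hclosed hcover
    obtain ⟨y, hy⟩ := hNne
    set O' : Set G := ⇑((α ^ N : MulAut G).symm) ⁻¹'
      (interior (⇑(α ^ N : MulAut G) ⁻¹' (C : Set G))) with hO'def
    have hO'open : IsOpen O' := (isOpen_interior).preimage (hcontpowsymm N)
    have hO'mem : (α ^ N) y ∈ O' := by
      rw [hO'def]
      refine Set.mem_preimage.mpr ?_
      rw [MulEquiv.symm_apply_apply]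
      exact hy
    have hO'sub : O' ⊆ (C : Set G) := by
      intro z hz
      have h1 : ((α ^ N : MulAut G).symm) z ∈ ⇑(α ^ N : MulAut G) ⁻¹' (C : Set G) :=
        interior_subset (Set.mem_preimage.mp hz)
      have h2 : (α ^ N) (((α ^ N : MulAut G).symm) z) ∈ (C : Set G) := Set.mem_preimage.mp h1
      rwa [MulEquiv.apply_symm_apply] at h2
    exact Subgroup.isOpen_of_mem_nhds C
      (Filter.mem_of_superset (hO'open.mem_nhds hO'mem) hO'sub)
  exact ⟨C, ⟨hCcpt, hCopen, hCinv, hCnorm⟩, hCsub.trans (hU₁sub.trans hU₀sub)⟩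

end Main

open Filter Topology

/-- If `H` is a compact subgroup of a totally disconnected locally compact
contraction group `(G, α)` with `α(H) ⊆ H`, then the index `[H : α(H)]` is finite. -/
theorem stmt4 (G : Type*) [Group G] [TopologicalSpace G] [IsTopologicalGroup G]
    [LocallyCompactSpace G] [T2Space G] [TotallyDisconnectedSpace G]
    (α : MulAut G) (hc : Continuous α) (hc' : Continuous α.symm)
    (hcontr : ∀ x : G, Tendsto (fun n : ℕ => (α ^ n) x) atTop (𝓝 1))
    (H : Subgroup G) (hHcpt : IsCompact (H : Set G)) (hHinv : ∀ x ∈ H, α x ∈ H) :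
    (H.map α.toMonoidHom).relIndex H ≠ 0 := by
  classical
  set f : G →* G := α.toMonoidHom with hfdef
  have hf_apply : ∀ x : G, f x = α x := fun x => rfl
  have hfinj : Function.Injective f := α.injective
  have hfsurj : Function.Surjective f := α.surjective
  -- basic: image of an open subgroup is open; comap of an open subgroup is open
  have hmap_coe : ∀ C : Subgroup G, ((C.map f : Subgroup G) : Set G) = ⇑α.symm ⁻¹' (C : Set G) := by
    intro C
    ext x
    simp only [SetLike.mem_coe, Subgroup.mem_map, Set.mem_preimage]
    constructor
    · rintro ⟨c, hc1, hc2⟩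
      rw [← hc2]
      have : α.symm (f c) = c := by
        rw [hf_apply]
        exact α.symm_apply_apply c
      rw [this]; exact hc1
    · intro hx
      exact ⟨α.symm x, hx, by rw [hf_apply]; exact α.apply_symm_apply x⟩
  have hmap_open : ∀ C : Subgroup G, IsOpen (C : Set G) →
      IsOpen ((C.map f : Subgroup G) : Set G) := by
    intro C hC
    rw [hmap_coe]
    exact hC.preimage hc'
  have hcomap_coe : ∀ C : Subgroup G, ((C.comap f : Subgroup G) : Set G) = ⇑α ⁻¹' (C : Set G) :=
    fun C => rfl
  have hcomap_open : ∀ C : Subgroup G, IsOpen (C : Set G) →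
      IsOpen ((C.comap f : Subgroup G) : Set G) := by
    intro C hC
    rw [hcomap_coe]
    exact hC.preimage hc
  -- a base good subgroup
  obtain ⟨C₀, hC₀good, _⟩ := goodsubgroup_exists α hc hc' hcontr H hHcpt hHinv
    (Ω := (univ : Set G)) univ_mem
  obtain ⟨hC₀cpt, hC₀open, hC₀inv, hC₀norm⟩ := hC₀good
  -- the constant d
  set d : ℕ := (C₀.map f).relIndex C₀ with hddef
  have hmap_le : ∀ C : Subgroup G, (∀ x ∈ C, α x ∈ C) → C.map f ≤ C := by
    intro C hCinv x hx
    obtain ⟨c, hc1, hc2⟩ := hx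
    rw [← hc2, hf_apply]
    exact hCinv c hc1
  have hd_ne : d ≠ 0 := by
    rw [hddef]
    exact relIndex_ne_zero_of_isOpen_of_isCompact (hmap_open C₀ hC₀open) hC₀cpt
  -- relIndex under the automorphism
  have hrel_map : ∀ A B : Subgroup G, (A.map f).relIndex (B.map f) = A.relIndex B := by
    intro A B
    have h1 := Subgroup.relIndex_comap (H := A.map f) f B
    rw [Subgroup.comap_map_eq_self_of_injective hfinj] at h1
    exact h1.symm
  -- d is the index [C : αC] for every good C below C₀
  have hd_const : ∀ C : Subgroup G, IsGoodSubgroup α H C → C ≤ C₀ →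
      (C.map f).relIndex C = d := by
    intro C hgood hle
    obtain ⟨hCcpt, hCopen, hCinv, hCnorm⟩ := hgood
    have ha_ne : C.relIndex C₀ ≠ 0 :=
      relIndex_ne_zero_of_isOpen_of_isCompact hCopen hC₀cpt
    have hCfle : C.map f ≤ C := hmap_le C hCinv
    have hC₀fle : C₀.map f ≤ C₀ := hmap_le C₀ hC₀inv
    have e1 : (C.map f).relIndex C * C.relIndex C₀ = (C.map f).relIndex C₀ :=
      Subgroup.relIndex_mul_relIndex _ _ _ hCfle hle
    have e2 : (C.map f).relIndex (C₀.map f) * (C₀.map f).relIndex C₀ =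
        (C.map f).relIndex C₀ :=
      Subgroup.relIndex_mul_relIndex _ _ _ (Subgroup.map_le_map_iff_of_injective hfinj |>.mpr hle)
        hC₀fle
    have e3 : (C.map f).relIndex (C₀.map f) = C.relIndex C₀ := hrel_map C C₀
    rw [e3] at e2
    rw [← e2] at e1
    rw [hddef]
    have := e1
    rw [mul_comm ((C.map f).relIndex C) (C.relIndex C₀)] at this
    exact Nat.eq_of_mul_eq_mul_left (Nat.pos_of_ne_zero ha_ne) this.symm |>.symm
  -- separation lemma
  have hsep : ∀ b : G, b ∈ H → b ∉ H.map f →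
      ∃ C : Subgroup G, IsGoodSubgroup α H C ∧ C ≤ C₀ ∧
        ¬∃ k ∈ H, ∃ w ∈ (H : Set G) ∩ (C : Set G), α k * w = b := by
    intro b hbH hbnA
    by_contra hcon
    push_neg at hcon
    set ι := {C : Subgroup G // IsGoodSubgroup α H C ∧ C ≤ C₀} with hιdef
    have hιne : Nonempty ι := ⟨⟨C₀, ⟨hC₀cpt, hC₀open, hC₀inv, hC₀norm⟩, le_refl _⟩⟩
    set Z : ι → Set (G × G) := fun C =>
      {p : G × G | p.1 ∈ H ∧ p.2 ∈ H ∧ p.2 ∈ C.1 ∧ α p.1 * p.2 = b} with hZdef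
    have hZne : ∀ C : ι, (Z C).Nonempty := by
      rintro ⟨C, hCgood, hCle⟩
      obtain ⟨k, hk, w, hw, heq⟩ := hcon C hCgood hCle
      exact ⟨(k, w), hk, hw.1, hw.2, heq⟩
    have hZclosed : ∀ C : ι, IsClosed (Z C) := by
      rintro ⟨C, hCgood, hCle⟩
      have h1 : IsClosed {p : G × G | p.1 ∈ H} :=
        (hHcpt.isClosed).preimage continuous_fst
      have h2 : IsClosed {p : G × G | p.2 ∈ H} :=
        (hHcpt.isClosed).preimage continuous_snd
      have h3 : IsClosed {p : G × G | p.2 ∈ C} :=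
        (hCgood.1.isClosed).preimage continuous_snd
      have h4 : IsClosed {p : G × G | α p.1 * p.2 = b} := by
        have : Continuous (fun p : G × G => α p.1 * p.2) :=
          (hc.comp continuous_fst).mul continuous_snd
        exact isClosed_eq this continuous_const
      have hZeq : Z ⟨C, hCgood, hCle⟩ =
          (({p : G × G | p.1 ∈ H} ∩ {p : G × G | p.2 ∈ H}) ∩ {p : G × G | p.2 ∈ C}) ∩
            {p : G × G | α p.1 * p.2 = b} := by
        ext p
        simp only [hZdef, Set.mem_setOf_eq, Set.mem_inter_iff]
        tauto
      rw [hZeq]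
      exact ((h1.inter h2).inter h3).inter h4
    have hZcpt : ∀ C : ι, IsCompact (Z C) := by
      intro C
      refine (hHcpt.prod hHcpt).of_isClosed_subset (hZclosed C) ?_
      rintro ⟨k, w⟩ ⟨hk, hw, _, _⟩
      exact ⟨hk, hw⟩
    have hZdir : Directed (· ⊇ ·) Z := by
      rintro ⟨C₁, hg₁, hle₁⟩ ⟨C₂, hg₂, hle₂⟩
      refine ⟨⟨C₁ ⊓ C₂, hg₁.inf hg₂, inf_le_left.trans hle₁⟩, ?_, ?_⟩
      · rintro p ⟨h1, h2, h3, h4⟩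
        exact ⟨h1, h2, h3.1, h4⟩
      · rintro p ⟨h1, h2, h3, h4⟩
        exact ⟨h1, h2, h3.2, h4⟩
    obtain ⟨⟨k, w⟩, hmem⟩ :=
      IsCompact.nonempty_iInter_of_directed_nonempty_isCompact_isClosed Z hZdir hZne hZcpt hZclosed
    have hmem' : ∀ C : ι, (k, w) ∈ Z C := fun C => mem_iInter.mp hmem C
    have hbase := hmem' ⟨C₀, ⟨hC₀cpt, hC₀open, hC₀inv, hC₀norm⟩, le_refl _⟩
    obtain ⟨hkH, hwH, -, heq⟩ := hbase
    have hw1 : w = 1 := by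
      by_contra hwne
      have hΩ : {w}ᶜ ∈ 𝓝 (1 : G) :=
        (isOpen_compl_singleton).mem_nhds (by simpa using (Ne.symm hwne))
      obtain ⟨C', hC'good, hC'sub⟩ := goodsubgroup_exists α hc hc' hcontr H hHcpt hHinv hΩ
      have hgood2 : IsGoodSubgroup α H (C' ⊓ C₀) :=
        hC'good.inf ⟨hC₀cpt, hC₀open, hC₀inv, hC₀norm⟩
      have := hmem' ⟨C' ⊓ C₀, hgood2, inf_le_right⟩
      obtain ⟨-, -, hwC, -⟩ := this
      exact (hC'sub hwC.1) rfl
    rw [hw1, mul_one] at heq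
    exact hbnA ⟨k, hkH, by rw [hf_apply]; exact heq⟩
  -- Now assume the index is infinite and derive a contradiction.
  intro h0
  -- the quotient H / (αH ∩ H) is infinite
  set A : Subgroup G := H.map f with hAdef
  have hAle : A ≤ H := hmap_le H hHinv
  have hinf : Infinite (H ⧸ A.subgroupOf H) := by
    have hcard : Nat.card (H ⧸ A.subgroupOf H) = 0 := h0
    rcases Nat.card_eq_zero.mp hcard with hempty | hinf
    · exact (hempty.false (QuotientGroup.mk (1 : H))).elim
    · exact hinf
  -- pick d+1 pairwise distinct cosets and representatives
  set emb : Fin (d + 1) ↪ (H ⧸ A.subgroupOf H) :=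
    (Fin.valEmbedding).trans (Infinite.natEmbedding _) with hembdef
  set x : Fin (d + 1) → H := fun i => (emb i).out with hxdef
  have hxsep : ∀ i j : Fin (d + 1), i ≠ j → ((x i)⁻¹ * x j : G) ∉ A := by
    intro i j hij hmem
    apply hij
    have : QuotientGroup.mk (s := A.subgroupOf H) (x i) = QuotientGroup.mk (x j) := by
      apply QuotientGroup.eq.mpr
      rw [Subgroup.mem_subgroupOf]
      simpa using hmem
    rw [hxdef] at this
    simp only [QuotientGroup.out_eq'] at this
    exact emb.injective this
  -- separate each bad pair away from αH·(H∩C) for some good C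
  have hCex : ∀ i j : Fin (d + 1), ∃ C : Subgroup G, IsGoodSubgroup α H C ∧ C ≤ C₀ ∧
      (i ≠ j → ¬∃ k ∈ H, ∃ w ∈ (H : Set G) ∩ (C : Set G), α k * w = ((x i)⁻¹ * x j : G)) := by
    intro i j
    by_cases hij : i = j
    · exact ⟨C₀, ⟨hC₀cpt, hC₀open, hC₀inv, hC₀norm⟩, le_refl _, fun h => absurd hij h⟩
    · obtain ⟨C, hgood, hle, hnot⟩ := hsep ((x i)⁻¹ * x j : G)
        (by exact mul_mem (inv_mem (x i).2) (x j).2)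
        (fun hmem => hxsep i j hij hmem)
      exact ⟨C, hgood, hle, fun _ => hnot⟩
  choose Cs hCsgood hCsle hCssep using hCex
  -- intersect them all
  set C : Subgroup G := C₀ ⊓ ⨅ p : Fin (d + 1) × Fin (d + 1), Cs p.1 p.2 with hCdef
  have hCgood : IsGoodSubgroup α H C :=
    IsGoodSubgroup.inf_iInf ⟨hC₀cpt, hC₀open, hC₀inv, hC₀norm⟩ (fun p => hCsgood p.1 p.2)
  have hCle : C ≤ C₀ := inf_le_left
  have hCleCs : ∀ i j : Fin (d + 1), C ≤ Cs i j := by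
    intro i j
    exact inf_le_right.trans (iInf_le _ (i, j))
  obtain ⟨hCcpt, hCopen, hCinv, hCnorm⟩ := hCgood
  -- auxiliary subgroups
  set P : Subgroup G := H ⊓ C with hPdef
  set Q : Subgroup G := H ⊓ C.comap f with hQdef
  have hCcomap : C ≤ C.comap f := by
    intro y hy
    have : f y ∈ C := by rw [hf_apply]; exact hCinv y hy
    exact this
  have hPleQ : P ≤ Q := inf_le_inf_left H hCcomap
  have hQleH : Q ≤ H := inf_le_left
  have hPleH : P ≤ H := inf_le_left
  -- finiteness of the relevant indices
  have hp_ne : P.relIndex H ≠ 0 := by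
    have : P = C ⊓ H := by rw [hPdef, inf_comm]
    rw [this, Subgroup.inf_relIndex_right]
    exact relIndex_ne_zero_of_isOpen_of_isCompact hCopen hHcpt
  have hq_ne : Q.relIndex H ≠ 0 := by
    have : Q = C.comap f ⊓ H := by rw [hQdef, inf_comm]
    rw [this, Subgroup.inf_relIndex_right]
    exact relIndex_ne_zero_of_isOpen_of_isCompact (hcomap_open C hCopen) hHcpt
  -- subgroups of ↥H
  set A' : Subgroup H := A.subgroupOf H with hA'def
  set P' : Subgroup H := P.subgroupOf H with hP'def
  set Q' : Subgroup H := Q.subgroupOf H with hQ'def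
  have hP'normal : P'.Normal := by
    constructor
    intro n hn g
    rw [hP'def, Subgroup.mem_subgroupOf] at hn ⊢
    have hcoe : ((g * n * g⁻¹ : H) : G) = (g : G) * (n : G) * (g : G)⁻¹ := by
      push_cast; ring_nf
    rw [hcoe]
    rw [hPdef, Subgroup.mem_inf] at hn ⊢
    exact ⟨H.mul_mem (H.mul_mem g.2 hn.1) (H.inv_mem g.2),
      hCnorm (g : G) g.2 (n : G) hn.2⟩
  set R' : Subgroup H := A' ⊔ P' with hR'def
  have hP'leR' : P' ≤ R' := le_sup_right
  have hP'leQ' : P' ≤ Q' := by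
    intro y hy
    rw [hP'def, Subgroup.mem_subgroupOf] at hy
    rw [hQ'def, Subgroup.mem_subgroupOf]
    exact hPleQ hy
  -- index identities
  have hQ'index : Q'.index = Q.relIndex H := rfl
  have hP'index : P'.index = P.relIndex H := rfl
  have kchain : P'.relIndex A' = Q'.index := by
    have k1 : P'.relIndex A' = P.relIndex A := Subgroup.relIndex_subgroupOf hAle
    have k2 : P.relIndex A = C.relIndex A := by
      have hPA : P ⊓ A = C ⊓ A := by
        apply le_antisymm
        · exact inf_le_inf_right A (by rw [hPdef]; exact inf_le_right)
        · apply le_inf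
          · rw [hPdef]
            exact le_inf (inf_le_right.trans hAle) inf_le_left
          · exact inf_le_right
      rw [← Subgroup.inf_relIndex_right (H := P) (K := A), hPA,
        Subgroup.inf_relIndex_right]
    have k3 : C.relIndex A = (C.comap f).relIndex H := by
      have := Subgroup.relIndex_comap (H := C) f H
      rw [hAdef]
      exact this.symm
    have k4 : (C.comap f).relIndex H = Q.relIndex H := by
      have : Q = C.comap f ⊓ H := by rw [hQdef, inf_comm]
      rw [this, Subgroup.inf_relIndex_right]
    rw [k1, k2, k3, k4, hQ'index]
  have hrelsup : P'.relIndex R' = P'.relIndex A' := by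
    rw [hR'def]
    exact Subgroup.relIndex_sup_right A' P'
  have t1 : P'.relIndex R' * R'.index = P'.index := Subgroup.relIndex_mul_index hP'leR'
  have t2 : P'.relIndex Q' * Q'.index = P'.index := Subgroup.relIndex_mul_index hP'leQ'
  have hR'index : R'.index = P'.relIndex Q' := by
    haveI := hP'normal
    have e1 : Q'.index * R'.index = P'.index := by
      rw [← kchain, ← hrelsup]
      exact t1
    have e2 : R'.index * Q'.index = P'.relIndex Q' * Q'.index := by
      rw [mul_comm R'.index Q'.index, e1, t2]
    have hq' : 0 < Q'.index := Nat.pos_of_ne_zero (by rw [hQ'index]; exact hq_ne)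
    exact Nat.eq_of_mul_eq_mul_right hq' e2
  -- the final bound
  have hCd : C.relIndex (C.comap f) = d := by
    have h1 : ((C.comap f).map f) = C := Subgroup.map_comap_eq_self_of_surjective hfsurj C
    have h2 := hrel_map C (C.comap f)
    rw [h1] at h2
    rw [← h2]
    exact hd_const C ⟨hCcpt, hCopen, hCinv, hCnorm⟩ hCle
  have hbound : P'.relIndex Q' ≤ d := by
    have b1 : P'.relIndex Q' = P.relIndex Q := Subgroup.relIndex_subgroupOf hQleH
    have b2 : P.relIndex Q = C.relIndex Q := by
      have hPQ : P ⊓ Q = C ⊓ Q := by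
        apply le_antisymm
        · exact inf_le_inf_right Q (by rw [hPdef]; exact inf_le_right)
        · apply le_inf
          · rw [hPdef]
            exact le_inf (inf_le_right.trans hQleH) inf_le_left
          · exact inf_le_right
      rw [← Subgroup.inf_relIndex_right (H := P) (K := Q), hPQ,
        Subgroup.inf_relIndex_right]
    have b3 : C.relIndex Q ≤ C.relIndex (C.comap f) :=
      Subgroup.relIndex_le_of_le_right inf_le_right (by rw [hCd]; exact hd_ne)
    rw [b1, b2]
    rw [hCd] at b3
    exact b3
  have hR'ne : R'.index ≠ 0 := by
    intro h0'
    apply hp_ne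
    rw [← hP'index, ← t1, h0', mul_zero]
  have hfinR : Finite (H ⧸ R') := by
    apply Nat.finite_of_card_ne_zero
    show (R'.index : ℕ) ≠ 0
    exact hR'ne
  -- the injection and pigeonhole
  have hginj : Function.Injective (fun i : Fin (d + 1) => (QuotientGroup.mk (x i) : H ⧸ R')) := by
    haveI := hP'normal
    intro i j hij'
    by_contra hne
    have hmem : (x i)⁻¹ * (x j) ∈ R' := QuotientGroup.eq.mp hij'
    have hset : ((x i)⁻¹ * (x j) : H) ∈ ((A' : Set H) * (P' : Set H)) := by
      rw [← Subgroup.mul_normal A' P']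
      exact hmem
    obtain ⟨a, ha, p, hp, hap⟩ := Set.mem_mul.mp hset
    apply hCssep i j hne
    have ha' : a ∈ A' := ha
    have hp' : p ∈ P' := hp
    rw [hA'def, Subgroup.mem_subgroupOf, hAdef, Subgroup.mem_map] at ha'
    rw [hP'def, Subgroup.mem_subgroupOf, hPdef, Subgroup.mem_inf] at hp'
    obtain ⟨k, hkH, hk⟩ := ha'
    refine ⟨k, hkH, (p : G), ⟨hp'.1, hCleCs i j hp'.2⟩, ?_⟩
    have hcoe2 : ((a : G)) * ((p : G)) = ((x i : G))⁻¹ * ((x j : G)) := by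
      have := congrArg (fun z : H => (z : G)) hap
      push_cast at this
      exact this
    calc α k * (p : G) = (a : G) * (p : G) := by rw [← hf_apply, hk]
      _ = ((x i : G))⁻¹ * ((x j : G)) := hcoe2
  have hcard : Nat.card (Fin (d + 1)) ≤ Nat.card (H ⧸ R') :=
    Nat.card_le_card_of_injective _ hginj
  have hcard2 : Nat.card (H ⧸ R') = R'.index := rfl
  have hcard3 : Nat.card (Fin (d + 1)) = d + 1 := by simp
  have : d + 1 ≤ d := by
    calc d + 1 = Nat.card (Fin (d + 1)) := hcard3.symm
      _ ≤ Nat.card (H ⧸ R') := hcard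
      _ = R'.index := hcard2
      _ = P'.relIndex Q' := hR'index
      _ ≤ d := hbound
  omega
end

section
/- Let G be a totally disconnected locally compact group with contractive automorphism α. If H₁, H₂ are closed subgroups of G with α(H₁) ⊆ H₁, α(H₂) ⊆ H₂, and H₂ normalizes H₁, then the product set H₁H₂ is closed in G. -/
open Filter Topology Pointwise Set

section Helpers

variable {G : Type*} [Group G] [TopologicalSpace G] [IsTopologicalGroup G]

private lemma aux_pow_succ (α : MulAut G) (n : ℕ) (x : G) :
    (α ^ (n + 1)) x = (α ^ n) (α x) := by
  rw [pow_succ, MulAut.mul_apply]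

private lemma aux_pow_succ' (α : MulAut G) (n : ℕ) (x : G) :
    (α ^ (n + 1)) x = α ((α ^ n) x) := by
  rw [pow_succ', MulAut.mul_apply]

private lemma aux_cont (α : MulAut G) (hc : Continuous α) : ∀ n, Continuous ⇑(α ^ n) := by
  intro n
  induction n with
  | zero =>
      have : ⇑(α ^ 0) = id := funext fun x => by simp
      rw [this]; exact continuous_id
  | succ n ih =>
      have : ⇑(α ^ (n + 1)) = ⇑(α ^ n) ∘ ⇑α := funext fun x => aux_pow_succ α n x
      rw [this]; exact ih.comp hc

private lemma aux_cont_inv (α : MulAut G) (hc' : Continuous ⇑α.symm) :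
    ∀ n, Continuous ⇑((α ^ n)⁻¹) := by
  intro n
  have h : Continuous ⇑(α⁻¹) := by rw [MulAut.inv_def]; exact hc'
  have := aux_cont (α⁻¹) h n
  rwa [inv_pow] at this

private lemma aux_cancel (α : MulAut G) (n : ℕ) (x : G) :
    ((α ^ n)⁻¹) ((α ^ n) x) = x := by
  rw [MulAut.inv_def]; exact MulEquiv.symm_apply_apply _ _

private lemma aux_cancel' (α : MulAut G) (n : ℕ) (x : G) :
    (α ^ n) (((α ^ n)⁻¹) x) = x := by
  rw [MulAut.inv_def]; exact MulEquiv.apply_symm_apply _ _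

private lemma aux_pow_add (α : MulAut G) (a b : ℕ) (x : G) :
    (α ^ (a + b)) x = (α ^ a) ((α ^ b) x) := by
  rw [pow_add, MulAut.mul_apply]

/-- For `n ≤ M`, `(α^n)⁻¹ ((α^M) x) = (α^(M-n)) x`. -/
private lemma aux_shift (α : MulAut G) {n M : ℕ} (h : n ≤ M) (x : G) :
    ((α ^ n)⁻¹) ((α ^ M) x) = (α ^ (M - n)) x := by
  have : (α ^ M) x = (α ^ n) ((α ^ (M - n)) x) := by
    rw [← aux_pow_add α n (M - n) x, Nat.add_sub_cancel' h]
  rw [this, aux_cancel]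

private lemma aux_inv_iter (α : MulAut G) (S : Set G) (hS : ∀ y ∈ S, α y ∈ S) :
    ∀ n, ∀ y ∈ S, (α ^ n) y ∈ S := by
  intro n
  induction n with
  | zero => intro y hy; simpa [pow_zero, MulAut.one_apply] using hy
  | succ n ih =>
      intro y hy
      rw [aux_pow_succ' α n y]
      exact hS _ (ih y hy)

private lemma aux_mem_of_cluster {X : Type*} [TopologicalSpace X] {u : ℕ → X} {c : X}
    (hcl : MapClusterPt c atTop u) {S : Set X} (hS : IsClosed S)
    (h : ∀ᶠ k in atTop, u k ∈ S) : c ∈ S := by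
  by_contra hcmem
  have hfreq : ∃ᶠ k in atTop, u k ∈ Sᶜ :=
    mapClusterPt_iff_frequently.mp hcl Sᶜ (hS.isOpen_compl.mem_nhds hcmem)
  obtain ⟨k, hk1, hk2⟩ := (hfreq.and_eventually h).exists
  exact hk1 hk2

private lemma aux_cluster_mul {u z : ℕ → G} {c : G}
    (hu : MapClusterPt c atTop u) (hz : Tendsto z atTop (𝓝 1)) :
    MapClusterPt c atTop (fun k => u k * z k) := by
  rw [mapClusterPt_iff_frequently] at hu ⊢
  intro s hs
  have hmul : Tendsto (fun p : G × G => p.1 * p.2) (𝓝 c ×ˢ 𝓝 (1 : G)) (𝓝 c) := by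
    have h1 := (continuous_mul (M := G)).tendsto (c, (1 : G))
    rw [nhds_prod_eq] at h1
    simpa using h1
  have hpre : (fun p : G × G => p.1 * p.2) ⁻¹' s ∈ 𝓝 c ×ˢ 𝓝 (1 : G) := hmul hs
  obtain ⟨U₁, hU₁, U₂, hU₂, hsub⟩ := mem_prod_iff.mp hpre
  have hev : ∀ᶠ k in atTop, z k ∈ U₂ := hz hU₂
  refine ((hu U₁ hU₁).and_eventually hev).mono ?_
  rintro k ⟨h1, h2⟩
  exact hsub (mk_mem_prod h1 h2)

end Helpers

section VanDantzig

variable {G : Type*} [Group G] [TopologicalSpace G] [IsTopologicalGroup G]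
  [LocallyCompactSpace G] [T2Space G] [TotallyDisconnectedSpace G]

/-- van Dantzig: arbitrarily small compact open subgroups. -/
private lemma aux_vanDantzig {O : Set G} (hO : O ∈ 𝓝 1) :
    ∃ V : Subgroup G, IsOpen (V : Set G) ∧ IsCompact (V : Set G) ∧ (V : Set G) ⊆ O := by
  obtain ⟨O', hO'O, hO'open, hO'1⟩ := mem_nhds_iff.mp hO
  obtain ⟨K, hKcomp, hK1, hKO'⟩ := exists_compact_subset hO'open hO'1
  obtain ⟨W, hWclopen, hW1, hWK⟩ :=
    (loc_compact_Haus_tot_disc_of_zero_dim).mem_nhds_iff.mp (isOpen_interior.mem_nhds hK1)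
  have hWclopen' : IsClopen W := hWclopen
  have hWcomp : IsCompact W :=
    hKcomp.of_isClosed_subset hWclopen'.isClosed (hWK.trans interior_subset)
  -- ∃ T ∈ 𝓝 1, W * T ⊆ W
  have exist_mul : ∃ T ∈ 𝓝 (1 : G), W * T ⊆ W := by
    apply hWcomp.induction_on (p := fun S => ∃ T ∈ 𝓝 (1 : G), S * T ⊆ W)
      ⟨Set.univ, by simp only [univ_mem, empty_mul, empty_subset, and_self]⟩
      (fun u v huv ⟨T, hT, mem⟩ => ⟨T, hT, (mul_subset_mul_right huv).trans mem⟩)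
      (fun u v ⟨T₁, hT₁, mem1⟩ ⟨T₂, hT₂, mem2⟩ => ⟨T₁ ∩ T₂, inter_mem hT₁ hT₂, by
        rw [union_mul]
        exact union_subset (mul_subset_mul_left inter_subset_left |>.trans mem1)
          (mul_subset_mul_left inter_subset_right |>.trans mem2)⟩)
    intro x memW
    have hx1 : (x, (1 : G)) ∈ (fun p : G × G => p.1 * p.2) ⁻¹' W := by simp [memW]
    rcases isOpen_prod_iff.mp (continuous_mul.isOpen_preimage W <| hWclopen'.2) x 1 hx1 with
      ⟨U, V, Uopen, Vopen, xmemU, onememV, prodsub⟩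
    have h6 : U * V ⊆ W := mul_subset_iff.mpr fun _ hx _ hy => prodsub (mk_mem_prod hx hy)
    exact ⟨U ∩ W, ⟨U, Uopen.mem_nhds xmemU, W, fun _ a => a, rfl⟩,
      V, Vopen.mem_nhds onememV, fun _ a => h6 ((mul_subset_mul_right inter_subset_left) a)⟩
  obtain ⟨S, Smemnhds, mulclose⟩ := exist_mul
  obtain ⟨U, UsubS, Uopen, onememU⟩ := mem_nhds_iff.mp Smemnhds
  set T : Set G := U ∩ U⁻¹ with hTdef
  have Tnhd : T ∈ 𝓝 (1 : G) := by
    simp only [hTdef]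
    exact inter_mem (Uopen.mem_nhds onememU) (inv_mem_nhds_one G (Uopen.mem_nhds onememU))
  have Tinv : T⁻¹ = T := by simp [hTdef, inter_comm]
  have Topen : IsOpen T := Uopen.inter Uopen.inv
  have Tmul : W * T ⊆ W := fun a ha =>
    mulclose (mul_subset_mul_left UsubS (mul_subset_mul_left inter_subset_left ha))
  -- the subgroup generated: ⋃ n, T ^ (n+1)
  let Sgrp : Subgroup G :=
    { carrier := ⋃ n, T ^ (n + 1)
      mul_mem' := fun {a} {b} ha hb => by
        rcases mem_iUnion.mp ha with ⟨k, hk⟩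
        rcases mem_iUnion.mp hb with ⟨l, hl⟩
        apply mem_iUnion.mpr
        exact ⟨k + 1 + l, by rw [add_assoc, pow_add]; exact Set.mul_mem_mul hk hl⟩
      one_mem' := by
        apply mem_iUnion.mpr
        exact ⟨0, by simpa using mem_of_mem_nhds Tnhd⟩
      inv_mem' := fun {a} ha => by
        rcases mem_iUnion.mp ha with ⟨k, hk⟩
        apply mem_iUnion.mpr
        refine ⟨k, ?_⟩
        rw [← Tinv]
        simpa only [inv_pow, Set.mem_inv, inv_inv] using hk }
  have hSopen : IsOpen (Sgrp : Set G) := by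
    refine isOpen_iUnion fun n => ?_
    rw [pow_succ]
    exact Topen.mul_left
  have mulTpow : ∀ n : ℕ, W * T ^ (n + 1) ⊆ W := by
    intro n
    induction n with
    | zero => simpa using Tmul
    | succ n ih =>
        rw [pow_succ, ← mul_assoc]
        exact (Set.mul_subset_mul_right ih).trans Tmul
  have hSsubW : (Sgrp : Set G) ⊆ W := by
    intro y hy
    rcases mem_iUnion.mp hy with ⟨n, hn⟩
    have : y ∈ W * T ^ (n + 1) := ⟨1, hW1, y, hn, one_mul y⟩
    exact mulTpow n this
  have hSclosed : IsClosed (Sgrp : Set G) := Sgrp.isClosed_of_isOpen hSopen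
  have hScomp : IsCompact (Sgrp : Set G) := hWcomp.of_isClosed_subset hSclosed hSsubW
  exact ⟨Sgrp, hSopen, hScomp, fun y hy => hO'O (hKO' (interior_subset (hWK (hSsubW hy))))⟩

end VanDantzig

section Invariant

variable {G : Type*} [Group G] [TopologicalSpace G] [IsTopologicalGroup G]
  [LocallyCompactSpace G] [T2Space G] [TotallyDisconnectedSpace G]

/-- Arbitrarily small `α`-invariant compact open subgroups, via Baire. -/
private lemma aux_smallInv (α : MulAut G) (hc : Continuous α) (hc' : Continuous ⇑α.symm)
    (hcontr : ∀ x : G, Tendsto (fun n : ℕ => (α ^ n) x) atTop (𝓝 1))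
    {O : Set G} (hO : O ∈ 𝓝 1) :
    ∃ V : Subgroup G, IsOpen (V : Set G) ∧ IsCompact (V : Set G) ∧
      (∀ y ∈ (V : Set G), α y ∈ (V : Set G)) ∧ (V : Set G) ⊆ O := by
  obtain ⟨V₀, hV₀open, hV₀comp, hV₀O⟩ := aux_vanDantzig (G := G) hO
  -- the subgroups U N = {x | ∀ n, α^(N+n) x ∈ V₀}
  let U : ℕ → Subgroup G := fun N => ⨅ n : ℕ, Subgroup.comap ((α ^ (N + n)) : G ≃* G).toMonoidHom V₀
  have hUmem : ∀ N x, x ∈ U N ↔ ∀ n : ℕ, (α ^ (N + n)) x ∈ V₀ := by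
    intro N x
    simp [U, Subgroup.mem_iInf, Subgroup.mem_comap]
  have hUcoe : ∀ N, (U N : Set G) = ⋂ n : ℕ, ⇑(α ^ (N + n)) ⁻¹' (V₀ : Set G) := by
    intro N
    ext x
    simp [U, Subgroup.coe_iInf, Subgroup.coe_comap]
  have hUclosed : ∀ N, IsClosed (U N : Set G) := by
    intro N
    rw [hUcoe N]
    exact isClosed_iInter fun n => hV₀comp.isClosed.preimage (aux_cont α hc (N + n))
  have hUcover : ⋃ N : ℕ, (U N : Set G) = Set.univ := by
    ext x
    simp only [mem_iUnion, mem_univ, iff_true]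
    have := (hcontr x).eventually (hV₀open.mem_nhds (one_mem V₀ : (1 : G) ∈ (V₀ : Set G)))
    obtain ⟨N, hN⟩ := eventually_atTop.mp this
    exact ⟨N, (hUmem N x).mpr fun n => hN (N + n) (Nat.le_add_right N n)⟩
  obtain ⟨N, y, hy⟩ := nonempty_interior_of_iUnion_of_closed hUclosed hUcover
  have hUNopen : IsOpen (U N : Set G) :=
    Subgroup.isOpen_of_mem_nhds (U N) (mem_interior_iff_mem_nhds.mp hy)
  -- V := U 0
  have hU0coe : (U 0 : Set G) = (U N : Set G) ∩ ⋂ n ∈ Finset.range N, ⇑(α ^ n) ⁻¹' (V₀ : Set G) := by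
    ext x
    simp only [SetLike.mem_coe, hUmem, mem_inter_iff, mem_iInter, Finset.mem_range, mem_preimage]
    constructor
    · intro h
      refine ⟨fun n => by simpa using h (N + n), fun n _ => by simpa using h n⟩
    · rintro ⟨h1, h2⟩ n
      rcases lt_or_ge (0 + n) N with hn | hn
      · simpa using h2 (0 + n) (by simpa using hn)
      · have : 0 + n = N + (n - N) := by omega
        rw [this]
        exact h1 (n - N)
  have hU0open : IsOpen (U 0 : Set G) := by
    rw [hU0coe]
    exact hUNopen.inter (isOpen_biInter_finset fun n _ => hV₀open.preimage (aux_cont α hc n))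
  have hU0subV₀ : (U 0 : Set G) ⊆ (V₀ : Set G) := by
    intro x hx
    have := (hUmem 0 x).mp hx 0
    simpa using this
  have hU0comp : IsCompact (U 0 : Set G) := hV₀comp.of_isClosed_subset (hUclosed 0) hU0subV₀
  have hU0inv : ∀ y ∈ (U 0 : Set G), α y ∈ (U 0 : Set G) := by
    intro y hy
    have hy' := (hUmem 0 y).mp hy
    refine (hUmem 0 (α y)).mpr fun n => ?_
    have : (α ^ (0 + n)) (α y) = (α ^ (0 + n + 1)) y := (aux_pow_succ α (0 + n) y).symm
    rw [this]
    simpa using hy' (n + 1)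
  exact ⟨U 0, hU0open, hU0comp, hU0inv, hU0subV₀.trans hV₀O⟩

/-- Uniform contraction on compact sets. -/
private lemma aux_unif (α : MulAut G) (hc : Continuous α) (hc' : Continuous ⇑α.symm)
    (hcontr : ∀ x : G, Tendsto (fun n : ℕ => (α ^ n) x) atTop (𝓝 1))
    {K : Set G} (hK : IsCompact K) {O : Set G} (hO : O ∈ 𝓝 1) :
    ∃ N : ℕ, ∀ n ≥ N, ∀ y ∈ K, (α ^ n) y ∈ O := by
  classical
  obtain ⟨W, hWopen, _, hWinv, hWO⟩ := aux_smallInv α hc hc' hcontr hO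
  have hex : ∀ x : G, ∃ n : ℕ, (α ^ n) x ∈ (W : Set G) := fun x =>
    ((hcontr x).eventually (hWopen.mem_nhds (one_mem W : (1 : G) ∈ (W : Set G)))).exists
  let nf : G → ℕ := fun x => Nat.find (hex x)
  have hnf : ∀ x, (α ^ nf x) x ∈ (W : Set G) := fun x => Nat.find_spec (hex x)
  obtain ⟨t, _, htcover⟩ := hK.elim_nhds_subcover (fun x => ⇑(α ^ nf x) ⁻¹' (W : Set G))
    (fun x _ => ((hWopen.preimage (aux_cont α hc (nf x))).mem_nhds (hnf x)))
  refine ⟨t.sup nf, fun n hn y hy => ?_⟩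
  obtain ⟨x, hxt, hyx⟩ := by
    have := htcover hy
    simpa only [mem_iUnion, exists_prop] using this
  have hle : nf x ≤ n := le_trans (Finset.le_sup hxt) hn
  have : (α ^ n) y = (α ^ (n - nf x)) ((α ^ nf x) y) := by
    rw [← aux_pow_add α (n - nf x) (nf x) y, Nat.sub_add_cancel hle]
  rw [this]
  exact hWO (aux_inv_iter α (W : Set G) hWinv (n - nf x) _ hyx)

end Invariant

/-- If `H₁, H₂` are closed `α`-invariant subgroups of a totally disconnected
locally compact contraction group `(G, α)` and `H₂` normalizes `H₁`, then the
product set `H₁H₂` is closed in `G`. -/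
theorem stmt5 (G : Type*) [Group G] [TopologicalSpace G] [IsTopologicalGroup G]
    [LocallyCompactSpace G] [T2Space G] [TotallyDisconnectedSpace G]
    (α : MulAut G) (hc : Continuous α) (hc' : Continuous α.symm)
    (hcontr : ∀ x : G, Tendsto (fun n : ℕ => (α ^ n) x) atTop (𝓝 1))
    (H₁ H₂ : Subgroup G)
    (h₁closed : IsClosed (H₁ : Set G)) (h₂closed : IsClosed (H₂ : Set G))
    (h₁inv : ∀ x ∈ H₁, α x ∈ H₁) (h₂inv : ∀ x ∈ H₂, α x ∈ H₂)
    (hnorm : ∀ h ∈ H₂, ∀ x ∈ H₁, h * x * h⁻¹ ∈ H₁) :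
    IsClosed ((H₁ : Set G) * (H₂ : Set G)) := by
  classical
  set P : Set G := (H₁ : Set G) * (H₂ : Set G) with hPdef
  apply isClosed_of_closure_subset
  intro x hx
  -- a compact open α-invariant subgroup W
  obtain ⟨W, hWopen, hWcomp, hWinv, -⟩ :=
    aux_smallInv α hc hc' hcontr (univ_mem : (Set.univ : Set G) ∈ 𝓝 1)
  -- m with α^m x ∈ W ; V := (α^m)⁻¹' W
  obtain ⟨m, hm⟩ :=
    ((hcontr x).eventually (hWopen.mem_nhds (one_mem W : (1 : G) ∈ (W : Set G)))).exists
  set V : Subgroup G := Subgroup.comap ((α ^ m : MulAut G) : G ≃* G).toMonoidHom W with hVdef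
  have hVmem : ∀ y : G, y ∈ V ↔ (α ^ m) y ∈ W := fun y => by
    simp [hVdef, Subgroup.mem_comap]
  have hVcoe : (V : Set G) = ⇑(α ^ m) ⁻¹' (W : Set G) := by
    ext y; simp [hVdef, Subgroup.coe_comap]
  have hVopen : IsOpen (V : Set G) := by
    rw [hVcoe]; exact hWopen.preimage (aux_cont α hc m)
  have hVcomp : IsCompact (V : Set G) := by
    have himg : (V : Set G) = ⇑((α ^ m)⁻¹) '' (W : Set G) := by
      ext y
      rw [hVcoe]
      constructor
      · intro hy
        exact ⟨(α ^ m) y, hy, aux_cancel α m y⟩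
      · rintro ⟨w, hw, rfl⟩
        simpa [mem_preimage, aux_cancel' α m w] using hw
    rw [himg]
    exact hWcomp.image (aux_cont_inv α hc' m)
  have hVinv : ∀ y ∈ (V : Set G), α y ∈ (V : Set G) := by
    intro y hy
    have hy' : (α ^ m) y ∈ (W : Set G) := by rw [hVcoe] at hy; exact hy
    have : (α ^ m) (α y) = α ((α ^ m) y) := by
      rw [← aux_pow_succ α m y, aux_pow_succ' α m y]
    rw [hVcoe]
    show (α ^ m) (α y) ∈ (W : Set G)
    rw [this]
    exact hWinv _ hy'
  have hxV : x ∈ (V : Set G) := by rw [hVcoe]; exact hm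
  -- representations of depth n
  set Rep : G → ℕ → Prop := fun g n =>
    ∃ a b : G, a ∈ H₁ ∧ b ∈ H₂ ∧ a * b = g ∧ (α ^ n) a ∈ V ∧ (α ^ n) b ∈ V with hRepdef
  have hRepMono : ∀ g n, Rep g n → Rep g (n + 1) := by
    rintro g n ⟨a, b, ha, hb, hab, hfa, hfb⟩
    refine ⟨a, b, ha, hb, hab, ?_, ?_⟩
    · rw [aux_pow_succ' α n a]
      exact hVinv _ hfa
    · rw [aux_pow_succ' α n b]
      exact hVinv _ hfb
  have hRepLe : ∀ g n n', n ≤ n' → Rep g n → Rep g n' := by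
    intro g n n' hle h
    induction n' with
    | zero => simpa [Nat.le_zero.mp hle] using h
    | succ k ih =>
        rcases Nat.lt_or_ge n (k + 1) with h1 | h1
        · exact hRepMono g k (ih (Nat.lt_succ_iff.mp h1))
        · have : n = k + 1 := le_antisymm hle h1
          rwa [← this]
  have hexists : ∀ g, g ∈ P → g ∈ (V : Set G) → ∃ n, Rep g n := by
    intro g hgP hgV
    obtain ⟨a, ha, b, hb, hab⟩ := Set.mem_mul.mp hgP
    have := ((hcontr a).eventually (hVopen.mem_nhds (one_mem V : (1 : G) ∈ (V : Set G)))).exists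
    obtain ⟨n, hn⟩ := this
    refine ⟨n, a, b, ha, hb, hab, hn, ?_⟩
    have hg : (α ^ n) g ∈ (V : Set G) := aux_inv_iter α (V : Set G) hVinv n g hgV
    have : (α ^ n) b = ((α ^ n) a)⁻¹ * (α ^ n) g := by
      rw [← hab, map_mul]
      group
    rw [this]
    exact mul_mem (inv_mem hn) hg
  -- KEY CLAIM: uniform bound on depth
  have hclaim : ∃ N, ∀ g, g ∈ P → g ∈ (V : Set G) → Rep g N := by
    by_contra hcon
    push_neg at hcon
    choose gk hgkP hgkV hgknot using hcon
    have hfind : ∀ k : ℕ, ∃ n, Rep (gk k) n := fun k => hexists (gk k) (hgkP k) (hgkV k)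
    set nk : ℕ → ℕ := fun k => Nat.find (hfind k) with hnkdef
    have hnkspec : ∀ k, Rep (gk k) (nk k) := fun k => Nat.find_spec (hfind k)
    have hnkmin : ∀ k, ∀ j < nk k, ¬ Rep (gk k) j := fun k j hj => Nat.find_min (hfind k) hj
    have hnkgt : ∀ k, k < nk k := by
      intro k
      by_contra hle
      push_neg at hle
      exact hgknot k (hRepLe (gk k) (nk k) k hle (hnkspec k))
    choose ak bk hak hbk hprod hfa hfb using hnkspec
    set ck : ℕ → G := fun k => (α ^ nk k) (ak k) with hckdef
    set ek : ℕ → G := fun k => (α ^ nk k) (bk k) with hekdef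
    set zk : ℕ → G := fun k => (α ^ nk k) (gk k) with hzkdef
    have hce : ∀ k, ck k * ek k = zk k := by
      intro k
      simp only [hckdef, hekdef, hzkdef, ← map_mul]
      rw [hprod k]
    have hz : Tendsto zk atTop (𝓝 1) := by
      rw [tendsto_def]
      intro s hs
      obtain ⟨N, hN⟩ := aux_unif α hc hc' hcontr hVcomp hs
      refine mem_atTop_sets.mpr ⟨N, fun k hk => ?_⟩
      exact hN (nk k) (le_trans hk (le_of_lt (hnkgt k))) (gk k) (hgkV k)
    -- cluster point of ck in V
    have hckV : ∀ k, ck k ∈ (V : Set G) := fun k => hfa k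
    obtain ⟨c, hcV, hccl⟩ := hVcomp.exists_mapClusterPt (f := atTop) (u := ck)
      (le_principal_iff.mpr (mem_map.mpr (univ_mem' hckV)))
    -- properties of c
    have hcH1inv : ∀ n : ℕ, ((α ^ n)⁻¹) c ∈ H₁ := by
      intro n
      have hclosed : IsClosed (⇑((α ^ n)⁻¹) ⁻¹' (H₁ : Set G)) :=
        h₁closed.preimage (aux_cont_inv α hc' n)
      have hev : ∀ᶠ k in atTop, ck k ∈ ⇑((α ^ n)⁻¹) ⁻¹' (H₁ : Set G) := by
        refine eventually_atTop.mpr ⟨n, fun k hk => ?_⟩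
        have hn' : n ≤ nk k := le_trans hk (le_of_lt (hnkgt k))
        show ((α ^ n)⁻¹) (ck k) ∈ (H₁ : Set G)
        rw [hckdef]
        simp only []
        rw [aux_shift α hn' (ak k)]
        exact aux_inv_iter α (H₁ : Set G) h₁inv (nk k - n) _ (hak k)
      exact aux_mem_of_cluster hccl hclosed hev
    -- cluster point of ek is c⁻¹
    have heqek : (fun k => (ck k)⁻¹ * zk k) = ek := by
      funext k
      rw [← hce k]
      group
    have heccl : MapClusterPt c⁻¹ atTop ek := by
      have h1 : MapClusterPt c⁻¹ atTop ((fun y : G => y⁻¹) ∘ ck) :=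
        hccl.continuousAt_comp continuous_inv.continuousAt
      have h2 := aux_cluster_mul (G := G) (u := fun k => (ck k)⁻¹) (z := zk) h1 hz
      rwa [heqek] at h2
    have hcH2inv : ∀ n : ℕ, ((α ^ n)⁻¹) c⁻¹ ∈ H₂ := by
      intro n
      have hclosed : IsClosed (⇑((α ^ n)⁻¹) ⁻¹' (H₂ : Set G)) :=
        h₂closed.preimage (aux_cont_inv α hc' n)
      have hev : ∀ᶠ k in atTop, ek k ∈ ⇑((α ^ n)⁻¹) ⁻¹' (H₂ : Set G) := by
        refine eventually_atTop.mpr ⟨n, fun k hk => ?_⟩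
        have hn' : n ≤ nk k := le_trans hk (le_of_lt (hnkgt k))
        show ((α ^ n)⁻¹) (ek k) ∈ (H₂ : Set G)
        rw [hekdef]
        simp only []
        rw [aux_shift α hn' (bk k)]
        exact aux_inv_iter α (H₂ : Set G) h₂inv (nk k - n) _ (hbk k)
      exact aux_mem_of_cluster heccl hclosed hev
    -- frequently ck k * c⁻¹ ∈ α '' V
    set aVs : Set G := ⇑α.symm ⁻¹' (V : Set G) with haVsdef
    have haVsopen : IsOpen aVs := hVopen.preimage hc'
    have h1aVs : (1 : G) ∈ aVs := by
      show α.symm 1 ∈ (V : Set G)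
      rw [map_one]
      exact one_mem V
    set s : Set G := (fun y : G => y * c⁻¹) ⁻¹' aVs with hsdef
    have hsopen : IsOpen s := haVsopen.preimage (continuous_id.mul continuous_const)
    have hcs : c ∈ s := by
      show c * c⁻¹ ∈ aVs
      rw [mul_inv_cancel]
      exact h1aVs
    obtain ⟨k, hk⟩ := (mapClusterPt_iff_frequently.mp hccl s (hsopen.mem_nhds hcs)).exists
    -- build a representation of smaller depth : contradiction
    obtain ⟨mk, hmk⟩ : ∃ mk, nk k = mk + 1 :=
      ⟨nk k - 1, by have := hnkgt k; omega⟩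
    set d : G := ((α ^ nk k)⁻¹) c with hddef
    have hdH1 : d ∈ H₁ := hcH1inv (nk k)
    have hdH2 : d ∈ H₂ := by
      have h2 : ((α ^ nk k)⁻¹) c⁻¹ ∈ H₂ := hcH2inv (nk k)
      have : ((α ^ nk k)⁻¹) c⁻¹ = d⁻¹ := by rw [hddef, map_inv]
      rw [this] at h2
      exact (inv_mem_iff).mp h2
    set a' : G := ak k * d⁻¹ with ha'def
    set b' : G := d * bk k with hb'def
    have ha'H1 : a' ∈ H₁ := mul_mem (hak k) (inv_mem hdH1)
    have hb'H2 : b' ∈ H₂ := mul_mem hdH2 (hbk k)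
    have hab' : a' * b' = gk k := by
      rw [ha'def, hb'def, ← hprod k]
      group
    have hfd : (α ^ nk k) d = c := aux_cancel' α (nk k) c
    have hfa' : (α ^ nk k) a' = ck k * c⁻¹ := by
      rw [ha'def, map_mul, map_inv, hfd, hckdef]
    have hfa'm : (α ^ mk) a' ∈ V := by
      have h1 : α.symm ((α ^ nk k) a') ∈ (V : Set G) := by
        rw [hfa']
        exact hk
      have h2 : (α ^ nk k) a' = α ((α ^ mk) a') := by
        rw [hmk, aux_pow_succ' α mk a']
      rw [h2, MulEquiv.symm_apply_apply] at h1
      exact h1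
    have hfb'm : (α ^ mk) b' ∈ V := by
      have hg : (α ^ mk) (gk k) ∈ (V : Set G) :=
        aux_inv_iter α (V : Set G) hVinv mk (gk k) (hgkV k)
      have : (α ^ mk) b' = ((α ^ mk) a')⁻¹ * (α ^ mk) (gk k) := by
        rw [← hab', map_mul (α ^ mk) a' b', inv_mul_cancel_left]
      rw [this]
      exact mul_mem (inv_mem hfa'm) hg
    exact hnkmin k mk (by omega) ⟨a', b', ha'H1, hb'H2, hab', hfa'm, hfb'm⟩
  -- conclude
  obtain ⟨N, hN⟩ := hclaim
  set A : Set G := ⇑(α ^ N) ⁻¹' (V : Set G) ∩ (H₁ : Set G) with hAdef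
  set B : Set G := ⇑(α ^ N) ⁻¹' (V : Set G) ∩ (H₂ : Set G) with hBdef
  have hpreimg : ⇑(α ^ N) ⁻¹' (V : Set G) = ⇑((α ^ N)⁻¹) '' (V : Set G) := by
    ext y
    constructor
    · intro hy
      exact ⟨(α ^ N) y, hy, aux_cancel α N y⟩
    · rintro ⟨w, hw, rfl⟩
      simpa [mem_preimage, aux_cancel' α N w] using hw
  have hprecomp : IsCompact (⇑(α ^ N) ⁻¹' (V : Set G)) := by
    rw [hpreimg]
    exact hVcomp.image (aux_cont_inv α hc' N)
  have hAcomp : IsCompact A := hprecomp.inter_right h₁closed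
  have hBcomp : IsCompact B := hprecomp.inter_right h₂closed
  have hTcomp : IsCompact (A * B) := hAcomp.mul hBcomp
  have hTsubP : A * B ⊆ P := by
    rw [hPdef]
    exact mul_subset_mul inter_subset_right inter_subset_right
  have hPVsub : P ∩ (V : Set G) ⊆ A * B := by
    rintro g ⟨hgP, hgV⟩
    obtain ⟨a, b, ha, hb, hab, hfa, hfb⟩ := hN g hgP hgV
    rw [← hab]
    exact Set.mul_mem_mul ⟨hfa, ha⟩ ⟨hfb, hb⟩
  have hx' : x ∈ closure (P ∩ (V : Set G)) := by
    rw [mem_closure_iff] at hx ⊢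
    intro o ho hxo
    obtain ⟨y, hy1, hy2⟩ := hx (o ∩ (V : Set G)) (ho.inter hVopen) ⟨hxo, hxV⟩
    exact ⟨y, hy1.1, hy2, hy1.2⟩
  have : x ∈ A * B := hTcomp.isClosed.closure_subset ((closure_mono hPVsub) hx')
  exact hTsubP this
end
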